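/- arXiv:1005.3275 — 5 statements merged into one kernel-verified Lean document; each statement's English description precedes it below -/
import Mathlib

section
/- Let A be an integrally closed (normal) integral domain of mixed characteristic p > 0, let k ≥ 1 be an integer, and suppose there exists t ∈ A with t^{p^k} = p. Then for every a ∈ A with a^{p^k} ∈ pA one has a ∈ tA; equivalently, the k-th iterate of the Frobenius endomorphism of A/pA induces an injective ring homomorphism A/tA → A/pA. -/
theorem mem_span_root_of_pow_mem_span_p_general
    (A : Type) [CommRing A] [IsDomain A] [IsIntegrallyClosed A]
    (p : ℕ) (hp : p.Prime)
    (k : ℕ) (t : A) (ht : t ^ p ^ k = (p : A)) :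
    ∀ a : A, a ^ p ^ k ∈ Ideal.span {(p : A)} → a ∈ Ideal.span {t} := by
  intro a ha
  rw [Ideal.mem_span_singleton, ← ht] at ha
  exact Ideal.mem_span_singleton.mpr
    ((IsIntegrallyClosed.pow_dvd_pow_iff (pow_ne_zero k hp.ne_zero)).mp ha)

/-- **Lemma 4.4 (1).** Let `A` be an integrally closed (normal) integral domain of mixed
characteristic `p > 0`, let `k ≥ 1`, and suppose `t ∈ A` satisfies `t ^ (p ^ k) = p`. Then for
every `a ∈ A` with `a ^ (p ^ k) ∈ pA` one has `a ∈ tA`; equivalently, the `k`-th iterate of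
the Frobenius endomorphism of `A/pA` induces an injection `A/tA → A/pA`. -/
theorem mem_span_root_of_pow_mem_span_p
    (A : Type) [CommRing A] [IsDomain A] [IsIntegrallyClosed A]
    (p : ℕ) (hp : p.Prime) [CharZero A] (hpu : ¬ IsUnit (p : A))
    (k : ℕ) (hk : 1 ≤ k) (t : A) (ht : t ^ p ^ k = (p : A)) :
    ∀ a : A, a ^ p ^ k ∈ Ideal.span {(p : A)} → a ∈ Ideal.span {t} :=
  mem_span_root_of_pow_mem_span_p_general A p hp k t ht
end

section
/- Let B be an integral domain of mixed characteristic p > 0, and let B^+ be its absolute integral closure. Let t ∈ B^+ satisfy t^p = p. Then the p-th power map x ↦ x^p induces a ring isomorphism B^+/tB^+ ≅ B^+/pB^+. -/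
/-!
`B⁺` is integrally closed and, its fraction field being algebraically closed, every element of
`B⁺` is a `p`-th power. Since `B⁺/p` has characteristic `p`, `x ↦ x ^ p mod p` is a ring map
`B⁺ → B⁺/p`, surjective by the existence of `p`-th roots. Its kernel is `{x | t ^ p ∣ x ^ p}`,
which is `tB⁺` because in an integrally closed domain `t ^ p ∣ x ^ p` forces `t ∣ x`.
-/

open Ideal

theorem integralClosure.exists_pow_eq {R K : Type*} [CommRing R] [Field K] [IsAlgClosed K]
    [Algebra R K] {n : ℕ} (hn : n ≠ 0) (x : integralClosure R K) :
    ∃ y : integralClosure R K, y ^ n = x := by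
  obtain ⟨y, hy⟩ := IsAlgClosed.exists_pow_nat_eq (x : K) (Nat.pos_of_ne_zero hn)
  exact ⟨⟨y, .of_pow (Nat.pos_of_ne_zero hn) (hy ▸ x.2)⟩, Subtype.ext hy⟩

section FrobeniusQuotient

variable {R : Type*} [CommRing R] (p : ℕ) [Fact p.Prime] [CharP (R ⧸ span {(p : R)}) p]

noncomputable def frobeniusMk : R →+* R ⧸ span {(p : R)} :=
  (frobenius (R ⧸ span {(p : R)}) p).comp (Ideal.Quotient.mk _)

theorem frobeniusMk_apply (x : R) : frobeniusMk p x = Ideal.Quotient.mk _ (x ^ p) := by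
  simp [frobeniusMk, frobenius_def]

theorem frobeniusMk_surjective (hroot : ∀ x : R, ∃ y, y ^ p = x) :
    Function.Surjective (frobeniusMk p (R := R)) := by
  intro a
  obtain ⟨x, rfl⟩ := Quotient.mk_surjective a
  obtain ⟨y, rfl⟩ := hroot x
  exact ⟨y, frobeniusMk_apply p y⟩

theorem ker_frobeniusMk [IsDomain R] [IsIntegrallyClosed R] {t : R} (ht : t ^ p = p) :
    RingHom.ker (frobeniusMk p (R := R)) = span {t} := by
  ext x
  rw [RingHom.mem_ker, frobeniusMk_apply, Quotient.eq_zero_iff_mem, mem_span_singleton,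
    mem_span_singleton, ← ht, IsIntegrallyClosed.pow_dvd_pow_iff (Fact.out : p.Prime).ne_zero]

noncomputable def frobeniusQuotientEquiv [IsDomain R] [IsIntegrallyClosed R]
    (hroot : ∀ x : R, ∃ y, y ^ p = x) {t : R} (ht : t ^ p = p) :
    R ⧸ span {t} ≃+* R ⧸ span {(p : R)} :=
  (quotEquivOfEq (ker_frobeniusMk p ht).symm).trans
    (RingHom.quotientKerEquivOfSurjective (frobeniusMk_surjective p hroot))

theorem frobeniusQuotientEquiv_mk [IsDomain R] [IsIntegrallyClosed R]
    (hroot : ∀ x : R, ∃ y, y ^ p = x) {t : R} (ht : t ^ p = p) (x : R) :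
    frobeniusQuotientEquiv p hroot ht (Ideal.Quotient.mk _ x) = Ideal.Quotient.mk _ (x ^ p) :=
  frobeniusMk_apply p x

end FrobeniusQuotient

theorem frobenius_equiv_mod_p_root_general
    (B : Type) [CommRing B] [IsDomain B] (p : ℕ) (hp : p.Prime)
    (hpu : ¬ IsUnit (p : B))
    (t : integralClosure B (AlgebraicClosure (FractionRing B)))
    (ht : t ^ p = (p : integralClosure B (AlgebraicClosure (FractionRing B)))) :
    ∃ e : ((integralClosure B (AlgebraicClosure (FractionRing B)) ⧸ Ideal.span {t}) ≃+*
        (integralClosure B (AlgebraicClosure (FractionRing B)) ⧸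
          Ideal.span {(p : integralClosure B (AlgebraicClosure (FractionRing B)))})),
      ∀ x : integralClosure B (AlgebraicClosure (FractionRing B)),
        e (Ideal.Quotient.mk _ x) = Ideal.Quotient.mk _ (x ^ p) := by
  set K := AlgebraicClosure (FractionRing B)
  have : Fact p.Prime := ⟨hp⟩
  have : FaithfulSMul B K := .trans B (FractionRing B) K
  have : FaithfulSMul B (integralClosure B K) := .tower_bot B (integralClosure B K) K
  have : IsIntegrallyClosed (integralClosure B K) := .of_isIntegrallyClosedIn _ K
  -- `p` stays a nonunit in the integral extension `B⁺` of `B`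
  have : CharP (integralClosure B K ⧸ span {(p : integralClosure B K)}) p := by
    refine CharP.quotient _ p ?_
    rwa [mem_nonunits_iff, ← map_natCast (algebraMap B (integralClosure B K)), isUnit_map_iff]
  exact ⟨frobeniusQuotientEquiv p (integralClosure.exists_pow_eq hp.ne_zero) ht,
    frobeniusQuotientEquiv_mk p _ ht⟩

/-- Let `B` be an integral domain of mixed characteristic `p > 0` with absolute integral
closure `B⁺`, and let `t ∈ B⁺` satisfy `t ^ p = p`. Then the `p`-th power map `x ↦ x ^ p`
induces a ring isomorphism `B⁺/tB⁺ ≃ B⁺/pB⁺`. -/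
theorem frobenius_equiv_mod_p_root
    (B : Type) [CommRing B] [IsDomain B] (p : ℕ) (hp : p.Prime)
    [CharZero B] (hpu : ¬ IsUnit (p : B))
    (t : integralClosure B (AlgebraicClosure (FractionRing B)))
    (ht : t ^ p = (p : integralClosure B (AlgebraicClosure (FractionRing B)))) :
    ∃ e : ((integralClosure B (AlgebraicClosure (FractionRing B)) ⧸ Ideal.span {t}) ≃+*
        (integralClosure B (AlgebraicClosure (FractionRing B)) ⧸
          Ideal.span {(p : integralClosure B (AlgebraicClosure (FractionRing B)))})),
      ∀ x : integralClosure B (AlgebraicClosure (FractionRing B)),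
        e (Ideal.Quotient.mk _ x) = Ideal.Quotient.mk _ (x ^ p) :=
  frobenius_equiv_mod_p_root_general B p hp hpu t ht
end

section
/- The Fontaine ring E(R^+) is a (possibly non-Noetherian) local ring, i.e. its nonunits form an ideal; ⟨p⟩ is a nonzerodivisor on E(R^+); the projection Φ : E(R^+) → R^+/pR^+ is surjective and its kernel is the principal ideal ⟨p⟩E(R^+), so that there is a short exact sequence 0 → E(R^+) →⟨p⟩ E(R^+) →Φ R^+/pR^+ → 0; and E(R^+) is complete and separated in the ⟨p⟩-adic topology (the natural map E(R^+) → lim_n E(R^+)/⟨p⟩^nE(R^+) is an isomorphism). -/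
open IsLocalRing

/-- The absolute integral closure `R⁺` of a domain `R`. -/
noncomputable def AbsIntClosure (R : Type) [CommRing R] [IsDomain R] : Type :=
  integralClosure R (AlgebraicClosure (FractionRing R))

noncomputable instance (R : Type) [CommRing R] [IsDomain R] : CommRing (AbsIntClosure R) :=
  inferInstanceAs (CommRing (integralClosure R (AlgebraicClosure (FractionRing R))))

noncomputable instance (R : Type) [CommRing R] [IsDomain R] : Algebra R (AbsIntClosure R) :=
  inferInstanceAs (Algebra R (integralClosure R (AlgebraicClosure (FractionRing R))))

/-!
`R⁺` is local: a finite subalgebra `T` of it is a domain that is complete, hence Henselian, at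
`mT`, with `T ⧸ mT` Artinian; a second maximal ideal of `T` would give a nontrivial idempotent
of `T ⧸ mT`, which lifts to `T`. As `R⁺` is integrally closed, in `A = R⁺ ⧸ p` the annihilator
of `p_k ^ i` is generated by `p_k ^ j` whenever `i + j = p ^ k`, and `a ^ p ^ k = 0` forces
`p_k ∣ a`. Read coordinatewise in `E = lim_{x ↦ x ^ p} A`, these give every claim; the central
one is that `⟨p⟩ ^ m ∣ e` as soon as `p_k ^ m ∣ φ k e` for all large `k`.
-/

theorem IsPrecomplete.of_moduleFinite {R M : Type*} [CommRing R] (I : Ideal R)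
    [IsPrecomplete I R] [AddCommGroup M] [Module R M] [Module.Finite R M] : IsPrecomplete I M := by
  rw [← AdicCompletion.of_surjective_iff]
  intro y
  obtain ⟨t, rfl⟩ := AdicCompletion.ofTensorProduct_surjective_of_finite I M y
  induction t using TensorProduct.induction_on with
  | zero => exact ⟨0, by simp⟩
  | tmul r x =>
    obtain ⟨a, rfl⟩ := AdicCompletion.of_surjective I R r
    refine ⟨a • x, ?_⟩
    rw [AdicCompletion.ofTensorProduct_tmul, map_smul]
    exact (algebraMap_smul (AdicCompletion I R) a _).symm
  | add s t hs ht =>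
    obtain ⟨a, ha⟩ := hs
    obtain ⟨b, hb⟩ := ht
    exact ⟨a + b, by rw [map_add, ha, hb, map_add]⟩

open Polynomial in
theorem HenselianRing.exists_isIdempotentElem_mk_eq {T : Type*} [CommRing T] {N : Ideal T}
    [HenselianRing T N] {ε : T ⧸ N} (hε : IsIdempotentElem ε) :
    ∃ e : T, IsIdempotentElem e ∧ Ideal.Quotient.mk N e = ε := by
  obtain ⟨e₀, rfl⟩ := Ideal.Quotient.mk_surjective ε
  have hmonic : (X ^ 2 - X : T[X]).Monic := monic_X_pow_sub (degree_X_le.trans_lt (by norm_num))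
  have hderiv : (derivative (X ^ 2 - X : T[X])).eval e₀ = 2 * e₀ - 1 := by
    simp [one_add_one_eq_two]
  have hunit : IsUnit (Ideal.Quotient.mk N (2 * e₀ - 1)) := by
    refine .of_mul_eq_one (Ideal.Quotient.mk N (2 * e₀ - 1)) ?_
    rw [← map_mul, show (2 * e₀ - 1) * (2 * e₀ - 1) = 4 * (e₀ * e₀ - e₀) + 1 by ring,
      map_add, map_mul, map_sub, map_mul, hε.eq, sub_self, mul_zero, zero_add, map_one]
  obtain ⟨e, hroot, he⟩ := HenselianRing.is_henselian (I := N) _ hmonic e₀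
    (by rw [← Ideal.Quotient.eq_zero_iff_mem]; simpa [sq, sub_eq_zero] using hε.eq)
    (hderiv ▸ hunit)
  refine ⟨e, show e * e = e by simpa [IsRoot, sub_eq_zero, sq] using hroot, ?_⟩
  exact Ideal.Quotient.eq.mpr he

theorem IsLocalRing.of_isArtinianRing_of_isIdempotentElem {A : Type*} [CommRing A]
    [IsArtinianRing A] [Nontrivial A] (h : ∀ e : A, IsIdempotentElem e → e = 0 ∨ e = 1) :
    IsLocalRing A := by
  obtain ⟨M, hM⟩ := Ideal.exists_maximal A
  refine .of_unique_max_ideal ⟨M, hM, fun M' hM' => ?_⟩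
  by_contra hne
  obtain ⟨e, heM, he, hmem⟩ := IsArtinianRing.exists_not_mem_forall_mem_of_ne M
  rcases h e he with rfl | rfl
  · exact heM M.zero_mem
  · exact hM'.ne_top ((Ideal.eq_top_iff_one _).mpr (hmem M' hM'.isPrime hne))

/-- Idempotents of `T ⧸ N` lift to `T`, where there are none but `0` and `1`. -/
theorem IsLocalRing.of_henselianRing {T : Type*} [CommRing T] [IsDomain T] (N : Ideal T)
    [HenselianRing T N] [IsArtinianRing (T ⧸ N)] : IsLocalRing T := by
  have hN : N ≠ ⊤ := fun h => by
    simpa [h, Ideal.jacobson_eq_top_iff] using (HenselianRing.jac (I := N))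
  have : Nontrivial (T ⧸ N) := Ideal.Quotient.nontrivial_iff.mpr hN
  have : IsLocalRing (T ⧸ N) := .of_isArtinianRing_of_isIdempotentElem fun ε hε => by
    obtain ⟨e, he, rfl⟩ := HenselianRing.exists_isIdempotentElem_mk_eq hε
    rcases IsIdempotentElem.iff_eq_zero_or_one.mp he with rfl | rfl <;> simp
  have := isLocalHom_of_le_jacobson_bot N HenselianRing.jac
  exact (Ideal.Quotient.mk N).domain_isLocalRing

theorem IsLocalRing.of_moduleFinite_of_isPrecomplete (R T : Type*) [CommRing R]
    [IsNoetherianRing R] [IsLocalRing R] [IsPrecomplete (maximalIdeal R) R] [CommRing T]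
    [IsDomain T] [Algebra R T] [Module.Finite R T] : IsLocalRing T := by
  let N := (maximalIdeal R).map (algebraMap R T)
  have : IsAdicComplete N T :=
    { toIsHausdorff := IsHausdorff.map_algebraMap_iff.mpr inferInstance
      toIsPrecomplete := IsPrecomplete.map_algebraMap_iff.mpr (.of_moduleFinite _) }
  let := Ideal.Quotient.field (maximalIdeal R)
  have : Module.Finite (R ⧸ maximalIdeal R) (T ⧸ N) := .of_restrictScalars_finite R _ _
  have : IsArtinianRing (T ⧸ N) := .of_finite (R ⧸ maximalIdeal R) _
  exact .of_henselianRing N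

theorem IsLocalRing.of_isIntegral_of_isPrecomplete (R S : Type*) [CommRing R]
    [IsNoetherianRing R] [IsLocalRing R] [IsPrecomplete (maximalIdeal R) R] [CommRing S]
    [IsDomain S] [Algebra R S] [Algebra.IsIntegral R S] : IsLocalRing S := by
  refine .of_isUnit_or_isUnit_one_sub_self fun a => ?_
  let T := Algebra.adjoin R {a}
  have : Module.Finite R T :=
    ⟨(Submodule.fg_top _).mpr (Algebra.IsIntegral.isIntegral a).fg_adjoin_singleton⟩
  have : IsLocalRing T := .of_moduleFinite_of_isPrecomplete R T
  exact (isUnit_or_isUnit_one_sub_self (⟨a, Algebra.self_mem_adjoin_singleton R a⟩ : T)).imp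
    (·.map T.val) (·.map T.val)

namespace AbsIntClosure

variable (R : Type) [CommRing R] [IsDomain R]

instance : IsDomain (AbsIntClosure R) :=
  inferInstanceAs (IsDomain (integralClosure R (AlgebraicClosure (FractionRing R))))

instance : Algebra.IsIntegral R (AbsIntClosure R) :=
  inferInstanceAs (Algebra.IsIntegral R (integralClosure R (AlgebraicClosure (FractionRing R))))

instance : FaithfulSMul R (AbsIntClosure R) :=
  (faithfulSMul_iff_algebraMap_injective _ _).mpr fun _ _ h =>
    IsFractionRing.injective R (FractionRing R) <|
      (algebraMap (FractionRing R) (AlgebraicClosure (FractionRing R))).injective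
        (congrArg Subtype.val h :)

instance [CharZero R] : CharZero (AbsIntClosure R) :=
  charZero_of_injective_algebraMap (FaithfulSMul.algebraMap_injective R _)

variable {R}

theorem exists_pow_eq (a : AbsIntClosure R) {n : ℕ} (hn : n ≠ 0) : ∃ b, b ^ n = a := by
  obtain ⟨z, hz⟩ := IsAlgClosed.exists_pow_nat_eq a.1 (Nat.pos_of_ne_zero hn)
  exact ⟨⟨z, .of_pow (Nat.pos_of_ne_zero hn) (hz ▸ a.2)⟩, Subtype.ext hz⟩

theorem dvd_of_pow_dvd_pow {x u : AbsIntClosure R} {n : ℕ} (hn : n ≠ 0) (h : x ^ n ∣ u ^ n) :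
    x ∣ u := by
  obtain ⟨v, hv⟩ := h
  by_cases hx : x = 0
  · subst hx
    rw [zero_pow hn, zero_mul] at hv
    exact ⟨0, by simpa using pow_eq_zero_iff hn |>.mp hv⟩
  have hx' : x.1 ≠ 0 := fun h => hx (Subtype.ext h)
  have hz : (u.1 / x.1) ^ n = v.1 := by
    rw [div_pow, div_eq_iff (pow_ne_zero n hx')]
    exact congrArg Subtype.val (hv.trans (mul_comm _ _))
  refine ⟨⟨u.1 / x.1, .of_pow (Nat.pos_of_ne_zero hn) (hz ▸ v.2)⟩, Subtype.ext ?_⟩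
  exact (mul_div_cancel₀ u.1 hx').symm

theorem mk_dvd_of_pow_eq_zero {x q : AbsIntClosure R} {n : ℕ} (hn : n ≠ 0) (hq : x ^ n = q)
    {a : AbsIntClosure R ⧸ Ideal.span {q}} (h : a ^ n = 0) : Ideal.Quotient.mk _ x ∣ a := by
  obtain ⟨u, rfl⟩ := Ideal.Quotient.mk_surjective a
  rw [← map_pow, Ideal.Quotient.eq_zero_iff_mem, Ideal.mem_span_singleton, ← hq] at h
  obtain ⟨v, rfl⟩ := dvd_of_pow_dvd_pow hn h
  exact ⟨Ideal.Quotient.mk _ v, map_mul _ _ _⟩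

end AbsIntClosure

theorem Ideal.Quotient.mk_pow_dvd_of_mk_pow_mul_eq_zero {V : Type*} [CommRing V] [IsDomain V]
    {x q : V} {n i j : ℕ} (hx : x ≠ 0) (hq : x ^ n = q) (hij : i + j = n)
    {a : V ⧸ Ideal.span {q}} (h : Ideal.Quotient.mk _ x ^ i * a = 0) :
    Ideal.Quotient.mk _ x ^ j ∣ a := by
  obtain ⟨u, rfl⟩ := Ideal.Quotient.mk_surjective a
  rw [← map_pow, ← map_mul, Ideal.Quotient.eq_zero_iff_mem, Ideal.mem_span_singleton, ← hq,
    ← hij, pow_add] at h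
  obtain ⟨v, hv⟩ := (mul_dvd_mul_iff_left (pow_ne_zero i hx)).mp h
  exact ⟨Ideal.Quotient.mk _ v, by rw [hv, map_mul, map_pow]⟩

theorem Ideal.Quotient.surjective_pow {V : Type*} [CommRing V] (I : Ideal V) {n : ℕ}
    (h : ∀ u : V, ∃ b, b ^ n = u) : Function.Surjective fun a : V ⧸ I => a ^ n := fun a => by
  obtain ⟨u, rfl⟩ := Ideal.Quotient.mk_surjective a
  obtain ⟨b, rfl⟩ := h u
  exact ⟨Ideal.Quotient.mk I b, (map_pow _ _ _).symm⟩

theorem pow_pow_eq_of_pow_succ_eq {M : Type*} [Monoid M] {p : ℕ} {f : ℕ → M}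
    (h : ∀ n, f (n + 1) ^ p = f n) (k j : ℕ) : f (k + j) ^ p ^ j = f k := by
  induction j with
  | zero => simp
  | succ j ih => rw [← add_assoc, pow_succ', pow_mul, h, ih]

structure IsFrobeniusLimit {A E : Type*} [CommRing A] [CommRing E] (p : ℕ)
    (φ : ℕ → E →+* A) : Prop where
  map_succ_pow : ∀ e n, φ (n + 1) e ^ p = φ n e
  existsUnique : ∀ f : ℕ → A, (∀ n, f (n + 1) ^ p = f n) → ∃! e : E, ∀ n, φ n e = f n

namespace IsFrobeniusLimit

variable {A E : Type*} [CommRing A] [CommRing E] {p : ℕ} {φ : ℕ → E →+* A}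

theorem ext (hE : IsFrobeniusLimit p φ) {x y : E} (h : ∀ n, φ n x = φ n y) : x = y := by
  obtain ⟨z, -, hz⟩ := hE.existsUnique (fun n => φ n y) (hE.map_succ_pow y)
  exact (hz x h).trans (hz y fun _ => rfl).symm

theorem pow_pow (hE : IsFrobeniusLimit p φ) (e : E) (k j : ℕ) :
    φ (k + j) e ^ p ^ j = φ k e :=
  pow_pow_eq_of_pow_succ_eq (f := fun n => φ n e) (hE.map_succ_pow e) k j

theorem pow_pow_self (hE : IsFrobeniusLimit p φ) (e : E) (k : ℕ) : φ k e ^ p ^ k = φ 0 e := by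
  simpa using hE.pow_pow e 0 k

theorem exists_lift (hE : IsFrobeniusLimit p φ) {f : ℕ → A} (hf : ∀ n, f (n + 1) ^ p = f n) :
    ∃ e : E, ∀ n, φ n e = f n :=
  (hE.existsUnique f hf).exists

theorem isLocalHom_zero (hE : IsFrobeniusLimit p φ) (hp : p ≠ 0) : IsLocalHom (φ 0) where
  map_nonunit e he := by
    have hunit : ∀ k, IsUnit (φ k e) := fun k =>
      (isUnit_pow_iff (pow_ne_zero k hp)).mp (hE.pow_pow_self e k ▸ he)
    obtain ⟨e', he'⟩ := hE.exists_lift (f := fun k => Ring.inverse (φ k e)) fun n => by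
      rw [Ring.inverse_pow, hE.map_succ_pow]
    exact .of_mul_eq_one e' (hE.ext fun n => by
      rw [map_mul, he', map_one, Ring.mul_inverse_cancel _ (hunit n)])

theorem isLocalRing [IsLocalRing A] (hE : IsFrobeniusLimit p φ) (hp : p ≠ 0) : IsLocalRing E :=
  have := hE.isLocalHom_zero hp
  (φ 0).domain_isLocalRing

theorem surjective_zero (hE : IsFrobeniusLimit p φ) (h : Function.Surjective fun a : A => a ^ p) :
    Function.Surjective (φ 0) := fun a => by
  obtain ⟨e, he⟩ := hE.exists_lift (f := fun n => (Function.surjInv h)^[n] a) fun n => by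
    rw [Function.iterate_succ_apply']
    exact Function.surjInv_eq h _
  exact ⟨e, he 0⟩

theorem pow_eq_zero_of_le (hE : IsFrobeniusLimit p φ) {ϖ : E} (hϖ : φ 0 ϖ = 0) {k j : ℕ}
    (hj : p ^ k ≤ j) : φ k ϖ ^ j = 0 := by
  rw [← Nat.add_sub_cancel' hj, pow_add, hE.pow_pow_self, hϖ, zero_mul]

theorem eq_zero_of_mul_eq_zero (hE : IsFrobeniusLimit p φ) (hp : 1 < p) {ϖ : E}
    (hϖ : φ 0 ϖ = 0)
    (hann : ∀ k i j (a : A), i + j = p ^ k → φ k ϖ ^ i * a = 0 → φ k ϖ ^ j ∣ a)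
    {e : E} (he : ϖ * e = 0) : e = 0 :=
  hE.ext fun k => by
    have hp2 : 2 ≤ p ^ (k + 1) := hp.trans_le (Nat.le_self_pow (Nat.succ_ne_zero k) p)
    obtain ⟨j, hj⟩ := Nat.exists_eq_add_of_le (one_le_two.trans hp2)
    obtain ⟨c, hc⟩ := hann (k + 1) 1 j _ hj.symm (by rw [pow_one, ← map_mul, he, map_zero])
    have hjp : p ^ (k + 1) ≤ j * p := by nlinarith
    rw [map_zero, ← hE.map_succ_pow, hc, mul_pow, ← pow_mul, hE.pow_eq_zero_of_le hϖ hjp, zero_mul]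

theorem pow_dvd_of_forall_pow_dvd [Fact p.Prime] [CharP A p] (hE : IsFrobeniusLimit p φ)
    {ϖ : E} (hϖ : φ 0 ϖ = 0)
    (hann : ∀ k i j (a : A), i + j = p ^ k → φ k ϖ ^ i * a = 0 → φ k ϖ ^ j ∣ a)
    {m : ℕ} {e : E} (h : ∀ k, m ≤ p ^ k → φ k ϖ ^ m ∣ φ k e) : ϖ ^ m ∣ e := by
  have hp : p.Prime := Fact.out
  have hmp : m < p ^ m := Nat.lt_pow_self hp.one_lt
  have hm : ∀ k, m ≤ p ^ (k + m + 1) := fun k =>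
    hmp.le.trans (Nat.pow_le_pow_right hp.pos (by omega))
  -- Divide at level `k + m + 1` and push the quotients down by the `p ^ (m + 1)`-th power;
  -- Frobenius being additive, this power kills their defect of compatibility, a multiple of
  -- `φ L ϖ ^ j` with `j = p ^ L - m`.
  choose c hc using fun k => h (k + m + 1) (hm k)
  have hϖ' : ∀ k, φ (k + m + 1) ϖ ^ p ^ (m + 1) = φ k ϖ := fun k => by
    rw [add_assoc]; exact hE.pow_pow ϖ k (m + 1)
  have he' : ∀ k, φ (k + m + 1) e ^ p ^ (m + 1) = φ k e := fun k => by
    rw [add_assoc]; exact hE.pow_pow e k (m + 1)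
  set g : ℕ → A := fun k => c k ^ p ^ (m + 1)
  have hg : ∀ k, φ k ϖ ^ m * g k = φ k e := fun k => by
    rw [← hϖ', ← he', hc]
    ring
  have hcompat : ∀ k, g (k + 1) ^ p = g k := fun k => by
    set L := k + m + 1
    have hL : k + 1 + m + 1 = L + 1 := by omega
    have hc' : φ (L + 1) e = φ (L + 1) ϖ ^ m * c (k + 1) := hL ▸ hc (k + 1)
    have hdefect : φ L ϖ ^ m * (c (k + 1) ^ p - c k) = 0 := by
      rw [mul_sub, ← hc, ← hE.map_succ_pow ϖ, ← hE.map_succ_pow e, hc', sub_eq_zero]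
      ring
    obtain ⟨j, hj⟩ := Nat.exists_eq_add_of_le (hm k)
    obtain ⟨d, hd⟩ := hann L m j _ hj.symm hdefect
    have hjL : p ^ L ≤ j * p ^ (m + 1) := by
      have hsplit : p ^ L = p ^ k * p ^ (m + 1) := by rw [← pow_add]; rfl
      have hkj : p ^ k ≤ j := by
        rw [hsplit, pow_succ] at hj
        nlinarith [Nat.mul_le_mul_left (p ^ k * p ^ m) hp.two_le, Nat.one_le_pow k p hp.pos]
      exact hsplit ▸ Nat.mul_le_mul_right _ hkj
    rw [← sub_eq_zero]
    calc g (k + 1) ^ p - g k = (c (k + 1) ^ p - c k) ^ p ^ (m + 1) := by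
          simp only [g, sub_pow_char_pow, ← pow_mul, mul_comm]
      _ = 0 := by rw [hd, mul_pow, ← pow_mul, hE.pow_eq_zero_of_le hϖ hjL, zero_mul]
  obtain ⟨e', he''⟩ := hE.exists_lift hcompat
  exact ⟨e', hE.ext fun k => by rw [map_mul, map_pow, he'', hg]⟩
theorem map_eq_of_pow_dvd_sub (hE : IsFrobeniusLimit p φ) {ϖ : E} (hϖ : φ 0 ϖ = 0) {k m : ℕ}
    (hk : p ^ k ≤ m) {x y : E} (h : ϖ ^ m ∣ x - y) : φ k x = φ k y := by
  obtain ⟨c, hc⟩ := h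
  rw [← sub_eq_zero, ← map_sub, hc, map_mul, map_pow, hE.pow_eq_zero_of_le hϖ hk, zero_mul]

theorem ker_zero_eq_span [Fact p.Prime] [CharP A p] (hE : IsFrobeniusLimit p φ)
    {ϖ : E} (hϖ : φ 0 ϖ = 0)
    (hann : ∀ k i j (a : A), i + j = p ^ k → φ k ϖ ^ i * a = 0 → φ k ϖ ^ j ∣ a)
    (hnil : ∀ k (a : A), a ^ p ^ k = 0 → φ k ϖ ∣ a) :
    RingHom.ker (φ 0) = Ideal.span {ϖ} := by
  refine le_antisymm (fun e he => ?_) (Ideal.span_le.mpr (by simp [hϖ]))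
  rw [RingHom.mem_ker] at he
  rw [Ideal.mem_span_singleton]
  simpa using hE.pow_dvd_of_forall_pow_dvd hϖ hann (m := 1) fun k _ => by
    rw [pow_one]; exact hnil k _ (by rw [hE.pow_pow_self, he])

theorem isAdicComplete [Fact p.Prime] [CharP A p] (hE : IsFrobeniusLimit p φ)
    {ϖ : E} (hϖ : φ 0 ϖ = 0)
    (hann : ∀ k i j (a : A), i + j = p ^ k → φ k ϖ ^ i * a = 0 → φ k ϖ ^ j ∣ a) :
    IsAdicComplete (Ideal.span {ϖ}) E := by
  have hp : p.Prime := Fact.out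
  have hsmod : ∀ n (x y : E),
      x ≡ y [SMOD (Ideal.span {ϖ} ^ n • ⊤ : Submodule E E)] ↔ ϖ ^ n ∣ x - y := by
    intro n x y
    rw [SModEq.sub_mem, smul_eq_mul, Ideal.mul_top, Ideal.span_singleton_pow,
      Ideal.mem_span_singleton]
  refine
    { haus' := fun e he => hE.ext fun k => ?_
      prec' := fun {f} hf => ?_ }
  · exact hE.map_eq_of_pow_dvd_sub hϖ le_rfl ((hsmod _ _ _).mp (he (p ^ k)))
  · have hstab : ∀ k n, p ^ k ≤ n → φ k (f n) = φ k (f (p ^ k)) := fun k n h =>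
      (hE.map_eq_of_pow_dvd_sub hϖ le_rfl ((hsmod _ _ _).mp (hf h))).symm
    obtain ⟨L, hL⟩ := hE.exists_lift (f := fun k => φ k (f (p ^ k))) fun k => by
      rw [hE.map_succ_pow, hstab k (p ^ (k + 1)) (Nat.pow_le_pow_right hp.pos k.le_succ)]
    refine ⟨L, fun n => ?_⟩
    rw [hsmod]
    refine hE.pow_dvd_of_forall_pow_dvd hϖ hann fun k hk => ?_
    obtain ⟨c, hc⟩ := (hsmod _ _ _).mp (hf (le_max_left n (p ^ k)))
    rw [map_sub, hL, ← hstab k _ (le_max_right n (p ^ k)), ← map_sub, hc, map_mul, map_pow]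
    exact dvd_mul_right _ _

end IsFrobeniusLimit

theorem fontaine_ring_properties_general
    (p : ℕ) (hp : p.Prime) (d : ℕ) (hd : 0 < d)
    (R : Type) [CommRing R] [IsDomain R] [IsNoetherianRing R] [IsLocalRing R]
    [CharZero R] (hcompl : IsAdicComplete (maximalIdeal R) R)
    (x : Fin d → R) (hx0 : x ⟨0, hd⟩ = (p : R))
    (hxgen : maximalIdeal R = Ideal.span (Set.range x))
    -- the Fontaine ring `E(R⁺)` with its coordinate projections
    (E : Type) [CommRing E]
    (φ : (n : ℕ) → E →+* (AbsIntClosure R ⧸ Ideal.span {(p : AbsIntClosure R)}))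
    (hφ : ∀ (e : E) (n : ℕ), φ (n + 1) e ^ p = φ n e)
    (hφlim : ∀ f : ℕ → (AbsIntClosure R ⧸ Ideal.span {(p : AbsIntClosure R)}),
      (∀ n, f (n + 1) ^ p = f n) → ∃! e : E, ∀ n, φ n e = f n)
    -- the element `⟨p⟩` given by a compatible system of `p`-power roots of `p` in `R⁺`
    (pseq : ℕ → AbsIntClosure R) (hpseq0 : pseq 0 = (p : AbsIntClosure R))
    (hpseqpow : ∀ n, pseq (n + 1) ^ p = pseq n)
    (pE : E)
    (hpE : ∀ n, φ n pE = Ideal.Quotient.mk (Ideal.span {(p : AbsIntClosure R)}) (pseq n)) :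
    IsLocalRing E ∧
    (∀ e : E, pE * e = 0 → e = 0) ∧
    Function.Surjective (φ 0) ∧
    RingHom.ker (φ 0) = Ideal.span {pE} ∧
    IsAdicComplete (Ideal.span {pE}) E := by
  have : Fact p.Prime := ⟨hp⟩
  have hE : IsFrobeniusLimit p φ := ⟨hφ, hφlim⟩
  have hpm : (p : R) ∈ maximalIdeal R := hxgen ▸ Ideal.subset_span ⟨_, hx0⟩
  have : CharP (AbsIntClosure R ⧸ Ideal.span {(p : AbsIntClosure R)}) p := .quotient _ p <| by
    rwa [← map_natCast (algebraMap R _), mem_nonunits_iff, isUnit_map_iff, ← mem_nonunits_iff]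
  have : Nontrivial (AbsIntClosure R ⧸ Ideal.span {(p : AbsIntClosure R)}) :=
    CharP.nontrivial_of_char_ne_one hp.ne_one
  have := hcompl.toIsPrecomplete
  have : IsLocalRing (AbsIntClosure R) := .of_isIntegral_of_isPrecomplete R _
  have : IsLocalRing (AbsIntClosure R ⧸ Ideal.span {(p : AbsIntClosure R)}) :=
    .of_surjective' (Ideal.Quotient.mk _) Ideal.Quotient.mk_surjective
  have hpseq : ∀ k, pseq k ^ p ^ k = p := fun k => by
    simpa [hpseq0] using pow_pow_eq_of_pow_succ_eq hpseqpow 0 k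
  have hϖ : φ 0 pE = 0 := by simp [hpE, hpseq0]
  have hann : ∀ k i j a, i + j = p ^ k → φ k pE ^ i * a = 0 → φ k pE ^ j ∣ a := by
    intro k i j _ hij
    have hne : pseq k ≠ 0 := ne_zero_pow (pow_ne_zero k hp.ne_zero) (by simp [hpseq, hp.ne_zero])
    rw [hpE]
    exact Ideal.Quotient.mk_pow_dvd_of_mk_pow_mul_eq_zero hne (hpseq k) hij
  have hnil : ∀ k a, a ^ p ^ k = 0 → φ k pE ∣ a := fun k _ => by
    rw [hpE]
    exact AbsIntClosure.mk_dvd_of_pow_eq_zero (pow_ne_zero k hp.ne_zero) (hpseq k)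
  have hfrob := Ideal.Quotient.surjective_pow (Ideal.span {(p : AbsIntClosure R)})
    fun u => AbsIntClosure.exists_pow_eq u hp.ne_zero
  exact ⟨hE.isLocalRing hp.ne_zero, fun _ => hE.eq_zero_of_mul_eq_zero hp.one_lt hϖ hann,
    hE.surjective_zero hfrob, hE.ker_zero_eq_span hϖ hann hnil, hE.isAdicComplete hϖ hann⟩

/-- **Proposition 4.3 (1).** Let `(R, m)` be a complete regular local ring of mixed
characteristic `p > 0` with perfect residue field, with regular system of parameters
`p, x₂, …, x_d`, and let `R⁺` be its absolute integral closure. The Fontaine ring `E(R⁺)`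
(the perfection of `R⁺/pR⁺`, encoded here by a ring `E` with coordinate projections
`φ n : E →+* R⁺/pR⁺` identifying it with the inverse limit of `R⁺/pR⁺` along Frobenius) is a
(quasi)local ring, `⟨p⟩` is a nonzerodivisor on `E(R⁺)`, the projection `Φ = φ 0` is
surjective with kernel the principal ideal `⟨p⟩E(R⁺)` (giving the short exact sequence
`0 → E(R⁺) → E(R⁺) → R⁺/pR⁺ → 0`), and `E(R⁺)` is `⟨p⟩`-adically complete and separated. -/
theorem fontaine_ring_properties
    (p : ℕ) (hp : p.Prime) (d : ℕ) (hd : 0 < d)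
    (R : Type) [CommRing R] [IsDomain R] [IsNoetherianRing R] [IsLocalRing R]
    [CharZero R] (hcompl : IsAdicComplete (maximalIdeal R) R)
    (hdim : ringKrullDim R = d)
    (x : Fin d → R) (hx0 : x ⟨0, hd⟩ = (p : R))
    (hxgen : maximalIdeal R = Ideal.span (Set.range x))
    (hperf : Function.Bijective fun t : ResidueField R => t ^ p)
    -- the Fontaine ring `E(R⁺)` with its coordinate projections
    (E : Type) [CommRing E]
    (φ : (n : ℕ) → E →+* (AbsIntClosure R ⧸ Ideal.span {(p : AbsIntClosure R)}))
    (hφ : ∀ (e : E) (n : ℕ), φ (n + 1) e ^ p = φ n e)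
    (hφlim : ∀ f : ℕ → (AbsIntClosure R ⧸ Ideal.span {(p : AbsIntClosure R)}),
      (∀ n, f (n + 1) ^ p = f n) → ∃! e : E, ∀ n, φ n e = f n)
    -- the element `⟨p⟩` given by a compatible system of `p`-power roots of `p` in `R⁺`
    (pseq : ℕ → AbsIntClosure R) (hpseq0 : pseq 0 = (p : AbsIntClosure R))
    (hpseqpow : ∀ n, pseq (n + 1) ^ p = pseq n)
    (pE : E)
    (hpE : ∀ n, φ n pE = Ideal.Quotient.mk (Ideal.span {(p : AbsIntClosure R)}) (pseq n)) :
    IsLocalRing E ∧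
    (∀ e : E, pE * e = 0 → e = 0) ∧
    Function.Surjective (φ 0) ∧
    RingHom.ker (φ 0) = Ideal.span {pE} ∧
    IsAdicComplete (Ideal.span {pE}) E :=
  fontaine_ring_properties_general p hp d hd R hcompl x hx0 hxgen E φ hφ hφlim pseq hpseq0 hpseqpow
    pE hpE
end

section
/- Let T be a commutative ring and a, b ∈ T. Suppose that a is a nonzerodivisor on T, that b is a nonzerodivisor on T/aT, and that T is a-adically separated, i.e. ⋂_{n ≥ 1} a^nT = 0. Then b is a nonzerodivisor on T. -/
/-- Let `T` be a commutative ring and `a, b ∈ T`. If `a` is a nonzerodivisor on `T`, `b` is a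
nonzerodivisor on `T/aT`, and `T` is `a`-adically separated (`⋂ₙ aⁿT = 0`), then `b` is a
nonzerodivisor on `T`. -/
theorem nonzerodivisor_of_nonzerodivisor_mod
    (T : Type) [CommRing T] (a b : T)
    (ha : ∀ x : T, a * x = 0 → x = 0)
    (hb : ∀ x : T, b * x ∈ Ideal.span {a} → x ∈ Ideal.span {a})
    (hsep : ∀ x : T, (∀ n : ℕ, 1 ≤ n → x ∈ Ideal.span {a ^ n}) → x = 0) :
    ∀ x : T, b * x = 0 → x = 0 := by
  have hpow : ∀ n : ℕ, ∀ x : T, a ^ n * x = 0 → x = 0 := by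
    intro n
    induction n with
    | zero => intro x hx; simpa using hx
    | succ n ih =>
      intro x hx
      exact ih x (ha _ (by rw [← hx]; ring))
  intro x hx
  apply hsep
  intro n _
  induction n with
  | zero => simp [Ideal.mem_span_singleton]
  | succ n ih =>
    rcases n with _ | m
    · have : x ∈ Ideal.span {a} := hb x (by rw [hx]; exact Ideal.zero_mem _)
      simpa using this
    · rw [Ideal.mem_span_singleton] at ih
      obtain ⟨y, hy⟩ := ih (by omega)
      have hby : b * y = 0 := by
        apply hpow (m + 1)
        have : a ^ (m + 1) * (b * y) = b * x := by rw [hy]; ring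
        rw [this, hx]
      have : y ∈ Ideal.span {a} := hb y (by rw [hby]; exact Ideal.zero_mem _)
      rw [Ideal.mem_span_singleton] at this ⊢
      obtain ⟨z, hz⟩ := this
      exact ⟨z, by rw [hy, hz]; ring⟩
end

section
/- Let R be a commutative ring, x_1, ..., x_d ∈ R, T an R-algebra, and W a T-algebra such that x_1, ..., x_d is a possibly improper regular sequence on W: for each 0 ≤ j ≤ d−1, x_{j+1} is a nonzerodivisor on W/(x_1, ..., x_j)W (where the quotient W/(x_1, ..., x_d)W is allowed to be zero). Then for every relation x_{j+1}t_{j+1} = x_1t_1 + ⋯ + x_jt_j with t_1, ..., t_{j+1} ∈ T and 0 ≤ j ≤ d−1, the structure map T → W extends to a T-algebra homomorphism T[X_1, ..., X_j]/(t_{j+1} − (x_1X_1 + ⋯ + x_jX_j)) → W. -/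
/-- **Remark 3.4 (2).** Let `R` be a commutative ring, `x₁, …, x_d ∈ R`, `T` an `R`-algebra
and `W` a `T`-algebra on which `x₁, …, x_d` is a possibly improper regular sequence. Then for
every relation `x_{j+1} t_{j+1} = x₁t₁ + ⋯ + x_j t_j` in `T` (with `0 ≤ j ≤ d−1`), the
structure map `T → W` extends to a `T`-algebra homomorphism from the corresponding algebra
modification `T[X₁, …, X_j]/(t_{j+1} − (x₁X₁ + ⋯ + x_jX_j))` to `W`. -/
theorem algebra_modification_maps_to_possibly_improper_CM
    (R : Type) [CommRing R] (d : ℕ) (x : Fin d → R)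
    (T : Type) [CommRing T] [Algebra R T]
    (W : Type) [CommRing W] [Algebra T W] [Algebra R W] [IsScalarTower R T W]
    -- `x₁, …, x_d` is a possibly improper regular sequence on `W`
    (hW : ∀ (j : ℕ) (hj : j < d), ∀ w : W,
      algebraMap R W (x ⟨j, hj⟩) * w ∈
        Ideal.span (Set.range fun i : Fin j => algebraMap R W (x ⟨i.1, i.2.trans hj⟩)) →
      w ∈ Ideal.span (Set.range fun i : Fin j => algebraMap R W (x ⟨i.1, i.2.trans hj⟩))) :
    ∀ (j : ℕ) (hj : j < d) (t : Fin (j + 1) → T),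
      algebraMap R T (x ⟨j, hj⟩) * t (Fin.last j) =
        ∑ i : Fin j, algebraMap R T (x ⟨i.1, i.2.trans hj⟩) * t i.castSucc →
      Nonempty
        ((MvPolynomial (Fin j) T ⧸
            (Ideal.span {MvPolynomial.C (t (Fin.last j)) -
              ∑ i : Fin j, MvPolynomial.C (algebraMap R T (x ⟨i.1, i.2.trans hj⟩)) *
                MvPolynomial.X i})) →ₐ[T] W) := by
  intro j hj t ht
  -- image of t_last in W lies in span of the x_i
  have hmem : algebraMap T W (t (Fin.last j)) ∈
      Ideal.span (Set.range fun i : Fin j => algebraMap R W (x ⟨i.1, i.2.trans hj⟩)) := by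
    apply hW j hj
    have := congrArg (algebraMap T W) ht
    rw [map_mul, map_sum] at this
    rw [← IsScalarTower.algebraMap_apply R T W] at this
    rw [this]
    apply Ideal.sum_mem
    intro i _
    rw [map_mul, ← IsScalarTower.algebraMap_apply R T W]
    exact Ideal.mul_mem_right _ _ (Ideal.subset_span ⟨i, rfl⟩)
  rw [Ideal.span, Submodule.mem_span_range_iff_exists_fun] at hmem
  obtain ⟨c, hc⟩ := hmem
  refine ⟨Ideal.Quotient.liftₐ _ (MvPolynomial.aeval c) ?_⟩
  intro a ha
  rw [Ideal.mem_span_singleton] at ha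
  obtain ⟨b, rfl⟩ := ha
  rw [map_mul]
  convert zero_mul _
  rw [map_sub, map_sum, MvPolynomial.aeval_C]
  simp only [map_mul, MvPolynomial.aeval_C, MvPolynomial.aeval_X]
  rw [sub_eq_zero, ← hc]
  apply Finset.sum_congr rfl
  intro i _
  rw [← IsScalarTower.algebraMap_apply R T W, smul_eq_mul, mul_comm]
end
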